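/- The center of the Calkin algebra C(H) of an infinite-dimensional Hilbert space H consists exactly of the scalar multiples of the identity. -/

import Mathlib

/-!
If `a` commutes with every operator modulo the compacts, then for two orthonormal sequences
`e`, `f` the partial isometry `v : e n ↦ f n` gives
`⟪f n, a (f n)⟫ - ⟪e n, a (e n)⟫ = ⟪f n, (a v - v a) (e n)⟫ → 0`, since compact operators send
orthonormal sequences to null sequences. Hence the diagonal `⟪e n, a (e n)⟫` has one and the same
limit `z` along every orthonormal sequence. For `T = a - z` this forces the quadratic form of `T`
to be uniformly small on the orthogonal complement of some finite-dimensional subspace `K`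
(otherwise a violating orthonormal sequence could be picked inductively); by polarization the
compression `P T P` to `Kᗮ` is then small in norm, while `T - P T P` has finite rank. So `T` is a
norm limit of compact operators.
-/

open ContinuousLinearMap Filter Topology Submodule
open scoped InnerProductSpace

section

variable {𝕜 E F : Type*} [RCLike 𝕜] [NormedAddCommGroup E] [InnerProductSpace 𝕜 E]
  [NormedAddCommGroup F] [InnerProductSpace 𝕜 F]

theorem exists_orthonormal_seq_of_forall_exists_mem_orthogonal {R : E → Prop}
    (h : ∀ K : Submodule 𝕜 E, FiniteDimensional 𝕜 K → ∃ x, ‖x‖ = 1 ∧ x ∈ Kᗮ ∧ R x) :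
    ∃ e : ℕ → E, Orthonormal 𝕜 e ∧ ∀ n, R (e n) := by
  have : Std.Symm fun x y : E => ⟪x, y⟫_𝕜 = 0 := ⟨fun _ _ => inner_eq_zero_symm.mp⟩
  obtain ⟨e, he, hpair⟩ := exists_seq_of_forall_finset_exists' (fun x => ‖x‖ = 1 ∧ R x)
    (fun x y => ⟪x, y⟫_𝕜 = 0) fun s _ => by
      obtain ⟨y, hy, hyK, hR⟩ := h (span 𝕜 s) inferInstance
      exact ⟨y, ⟨hy, hR⟩, fun x hx => inner_right_of_mem_orthogonal (subset_span hx) hyK⟩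
  exact ⟨e, ⟨fun n => (he n).1, hpair⟩, fun n => (he n).2⟩

theorem exists_orthonormal_seq (h : ¬ FiniteDimensional 𝕜 E) : ∃ e : ℕ → E, Orthonormal 𝕜 e := by
  have hunit (K : Submodule 𝕜 E) (hK : FiniteDimensional 𝕜 K) : ∃ x, ‖x‖ = 1 ∧ x ∈ Kᗮ ∧ True := by
    have hKtop : K ≠ ⊤ := by
      rintro rfl
      exact h ((Module.Finite.equiv_iff topEquiv).mp hK)
    obtain ⟨y, hy, hy0⟩ := exists_mem_ne_zero_of_ne_bot (mt orthogonal_eq_bot_iff.mp hKtop)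
    exact ⟨(‖y‖⁻¹ : 𝕜) • y, norm_smul_inv_norm hy0, smul_mem _ _ hy, trivial⟩
  obtain ⟨e, he, -⟩ := exists_orthonormal_seq_of_forall_exists_mem_orthogonal hunit
  exact ⟨e, he⟩

theorem Orthonormal.tendsto_inner_zero {e : ℕ → E} (he : Orthonormal 𝕜 e) (y : E) :
    Tendsto (fun n => ⟪e n, y⟫_𝕜) atTop (𝓝 0) := by
  have h := (he.inner_products_summable y).tendsto_atTop_zero
  rw [tendsto_zero_iff_norm_tendsto_zero]
  simpa using h.sqrt

theorem IsCompactOperator.tendsto_apply_orthonormal [CompleteSpace E] [CompleteSpace F]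
    {T : E →L[𝕜] F} (hT : IsCompactOperator T) {e : ℕ → E} (he : Orthonormal 𝕜 e) :
    Tendsto (fun n => T (e n)) atTop (𝓝 0) := by
  refine tendsto_of_subseq_tendsto fun ns hns => ?_
  obtain ⟨K, hK, hTK⟩ := hT.image_closedBall_subset_compact 1
  have hmem : ∀ n, T (e (ns n)) ∈ K := fun n => hTK ⟨e (ns n), by simp [he.1], rfl⟩
  obtain ⟨w, -, φ, hφ, hw⟩ := hK.tendsto_subseq hmem
  have hweak : Tendsto (fun n => ⟪T (e (ns (φ n))), w⟫_𝕜) atTop (𝓝 0) := by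
    simpa [Function.comp_def, adjoint_inner_right] using
      (he.tendsto_inner_zero (adjoint T w)).comp (hns.comp hφ.tendsto_atTop)
  have hw0 : w = 0 :=
    inner_self_eq_zero.mp (tendsto_nhds_unique (hw.inner tendsto_const_nhds) hweak)
  exact ⟨φ, hw0 ▸ hw⟩

section PartialIsometry

variable {ι : Type*} [CompleteSpace E] [CompleteSpace F]

noncomputable def Orthonormal.isometryL2 {e : ι → E} (he : Orthonormal 𝕜 e) :
    lp (fun _ : ι => 𝕜) 2 →L[𝕜] E :=
  he.orthogonalFamily.linearIsometry.toContinuousLinearMap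

theorem Orthonormal.isometryL2_single [DecidableEq ι] {e : ι → E} (he : Orthonormal 𝕜 e) (i : ι) :
    he.isometryL2 (lp.single 2 i 1) = e i := by
  simp [isometryL2, he.orthogonalFamily.linearIsometry_apply_single]

theorem Orthonormal.adjoint_isometryL2_apply [DecidableEq ι] {e : ι → E} (he : Orthonormal 𝕜 e)
    (i : ι) : adjoint he.isometryL2 (e i) = lp.single 2 i 1 := by
  have h : adjoint he.isometryL2 ∘L he.isometryL2 = 1 :=
    (isometry_iff_adjoint_comp_self _).mp he.orthogonalFamily.linearIsometry.isometry
  rw [← he.isometryL2_single i, ← comp_apply, h, one_apply_eq_self]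

theorem Orthonormal.exists_partialIsometry {e : ι → E} {f : ι → F} (he : Orthonormal 𝕜 e)
    (hf : Orthonormal 𝕜 f) : ∃ v : E →L[𝕜] F, ∀ i, v (e i) = f i ∧ adjoint v (f i) = e i := by
  classical
  refine ⟨hf.isometryL2 ∘L adjoint he.isometryL2, fun i => ⟨?_, ?_⟩⟩
  · rw [comp_apply, he.adjoint_isometryL2_apply, hf.isometryL2_single]
  · rw [adjoint_comp, adjoint_adjoint, comp_apply, hf.adjoint_isometryL2_apply,
      he.isometryL2_single]

end PartialIsometry

/-- The image of `a` in the Calkin algebra is central. -/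
def IsEssentiallyCentral (a : E →L[𝕜] E) : Prop :=
  ∀ b : E →L[𝕜] E, IsCompactOperator (a ∘L b - b ∘L a)

theorem isEssentiallyCentral_of_isCompactOperator_sub_smul_one {a : E →L[𝕜] E} {z : 𝕜}
    (hz : IsCompactOperator (a - z • (1 : E →L[𝕜] E))) : IsEssentiallyCentral a := fun b => by
  have hcomm : a ∘L b - b ∘L a = (a - z • 1) ∘L b - b ∘L (a - z • 1) := by
    ext; simp
  rw [hcomm]
  exact (hz.comp_clm b).sub (hz.clm_comp b)

theorem IsEssentiallyCentral.tendsto_inner_sub [CompleteSpace E] {a : E →L[𝕜] E}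
    (ha : IsEssentiallyCentral a) {e f : ℕ → E} (he : Orthonormal 𝕜 e) (hf : Orthonormal 𝕜 f) :
    Tendsto (fun n => ⟪f n, a (f n)⟫_𝕜 - ⟪e n, a (e n)⟫_𝕜) atTop (𝓝 0) := by
  obtain ⟨v, hv⟩ := he.exists_partialIsometry hf
  have hnull := (ha v).tendsto_apply_orthonormal he
  have key (n : ℕ) :
      ⟪f n, (a ∘L v - v ∘L a) (e n)⟫_𝕜 = ⟪f n, a (f n)⟫_𝕜 - ⟪e n, a (e n)⟫_𝕜 := by
    rw [sub_apply, inner_sub_right, comp_apply, comp_apply, (hv n).1, ← adjoint_inner_left v,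
      (hv n).2]
  simp_rw [← key]
  refine squeeze_zero_norm (fun n => ?_) (tendsto_zero_iff_norm_tendsto_zero.mp hnull)
  simpa [hf.1 n] using norm_inner_le_norm (f n) ((a ∘L v - v ∘L a) (e n))

theorem IsEssentiallyCentral.exists_tendsto_inner [CompleteSpace E] (hE : ¬ FiniteDimensional 𝕜 E)
    {a : E →L[𝕜] E} (ha : IsEssentiallyCentral a) :
    ∃ z : 𝕜, ∀ e : ℕ → E, Orthonormal 𝕜 e → Tendsto (fun n => ⟪e n, a (e n)⟫_𝕜) atTop (𝓝 z) := by
  obtain ⟨e₀, he₀⟩ := exists_orthonormal_seq hE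
  have hbdd : ∀ n, ⟪e₀ n, a (e₀ n)⟫_𝕜 ∈ Metric.closedBall (0 : 𝕜) ‖a‖ := fun n => by
    rw [mem_closedBall_zero_iff]
    calc ‖⟪e₀ n, a (e₀ n)⟫_𝕜‖ ≤ ‖e₀ n‖ * ‖a (e₀ n)‖ := norm_inner_le_norm _ _
      _ ≤ ‖a‖ := by simpa [he₀.1 n] using a.le_opNorm (e₀ n)
  obtain ⟨z, -, φ, hφ, hz⟩ := tendsto_subseq_of_bounded Metric.isBounded_closedBall hbdd
  refine ⟨z, fun e he => ?_⟩
  simpa using (ha.tendsto_inner_sub (he₀.comp φ hφ.injective) he).add hz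

theorem exists_finiteDimensional_norm_inner_apply_self_le {T : E →L[𝕜] E}
    (hT : ∀ e : ℕ → E, Orthonormal 𝕜 e → Tendsto (fun n => ⟪e n, T (e n)⟫_𝕜) atTop (𝓝 0))
    {ε : ℝ} (hε : 0 < ε) :
    ∃ K : Submodule 𝕜 E, FiniteDimensional 𝕜 K ∧ ∀ x ∈ Kᗮ, ‖⟪x, T x⟫_𝕜‖ ≤ ε * ‖x‖ ^ 2 := by
  by_contra! h
  obtain ⟨e, he, hlarge⟩ := exists_orthonormal_seq_of_forall_exists_mem_orthogonal
    (R := fun x => ε < ‖⟪x, T x⟫_𝕜‖) fun K hK => by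
      obtain ⟨x, hxK, hx⟩ := h K hK
      have hx0 : x ≠ 0 := by
        rintro rfl
        simp at hx
      refine ⟨(‖x‖⁻¹ : 𝕜) • x, norm_smul_inv_norm hx0, smul_mem _ _ hxK, ?_⟩
      simp only [map_smul, inner_smul_left, inner_smul_right, norm_mul, RCLike.norm_conj,
        norm_inv, RCLike.norm_ofReal, abs_norm]
      rwa [← mul_assoc, ← mul_inv, ← sq, lt_inv_mul_iff₀ (by positivity), mul_comm]
  obtain ⟨n, hn⟩ := ((hT e he).norm.eventually (gt_mem_nhds (by simpa using hε))).exists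
  exact lt_asymm hn (hlarge n)

theorem isCompactOperator_sub_compression (K : Submodule 𝕜 E)
    [FiniteDimensional 𝕜 K] (T : E →L[𝕜] E) :
    IsCompactOperator (T - Kᗮ.starProjection * T * Kᗮ.starProjection) := by
  have hQ : IsCompactOperator K.starProjection :=
    (isCompactOperator_of_locallyCompactSpace_dom K.orthogonalProjectionOnto).clm_comp K.subtypeL
  have hdecomp : T - Kᗮ.starProjection * T * Kᗮ.starProjection
      = K.starProjection * T + Kᗮ.starProjection * T * K.starProjection := by
    rw [starProjection_orthogonal']
    noncomm_ring
  rw [hdecomp]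
  exact (hQ.comp_clm T).add (hQ.clm_comp (Kᗮ.starProjection * T))

section Complex

variable {V : Type*} [NormedAddCommGroup V] [InnerProductSpace ℂ V]

theorem ContinuousLinearMap.opNorm_le_of_norm_inner_apply_self_le {S : V →L[ℂ] V} {ε : ℝ}
    (hε : 0 ≤ ε) (h : ∀ x, ‖⟪x, S x⟫_ℂ‖ ≤ ε * ‖x‖ ^ 2) : ‖S‖ ≤ 4 * ε := by
  refine opNorm_le_of_re_inner_le (by positivity) fun x y hx hy => ?_
  have hterm : ∀ c : ℂ, ‖c‖ = 1 → ‖⟪S (x + c • y), x + c • y⟫_ℂ‖ ≤ 4 * ε := fun c hc => by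
    rw [norm_inner_symm]
    calc ‖⟪x + c • y, S (x + c • y)⟫_ℂ‖ ≤ ε * ‖x + c • y‖ ^ 2 := h _
      _ ≤ ε * 2 ^ 2 := by
        gcongr
        calc ‖x + c • y‖ ≤ ‖x‖ + ‖c • y‖ := norm_add_le _ _
          _ = 2 := by rw [norm_smul, hc, hx, hy]; norm_num
      _ = 4 * ε := by ring
  have h1 := hterm 1 (by simp)
  have h2 := hterm (-1) (by simp)
  have h3 := hterm Complex.I (by simp)
  have h4 := hterm (-Complex.I) (by simp)
  simp only [one_smul, neg_smul, ← sub_eq_add_neg] at h1 h2 h3 h4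
  calc RCLike.re ⟪S x, y⟫_ℂ ≤ ‖⟪S x, y⟫_ℂ‖ := RCLike.re_le_norm _
    _ ≤ (4 * ε + 4 * ε + 4 * ε + 4 * ε) / 4 := by
      have hpol := inner_map_polarization' (S : V →ₗ[ℂ] V) x y
      simp only [coe_coe] at hpol
      rw [hpol, norm_div, Complex.norm_ofNat]
      gcongr
      refine (norm_add_le _ _).trans (add_le_add ((norm_sub_le _ _).trans
        (add_le_add ((norm_sub_le _ _).trans (add_le_add h1 h2)) ?_)) ?_) <;>
      rwa [norm_mul, Complex.norm_I, one_mul]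
    _ = 4 * ε := by ring

theorem isCompactOperator_of_tendsto_inner_apply_self [CompleteSpace V] {T : V →L[ℂ] V}
    (hT : ∀ e : ℕ → V, Orthonormal ℂ e → Tendsto (fun n => ⟪e n, T (e n)⟫_ℂ) atTop (𝓝 0)) :
    IsCompactOperator T := by
  refine isClosed_setOfPred_isCompactOperator.closure_subset
    (Metric.mem_closure_iff.mpr fun ε hε => ?_)
  obtain ⟨K, hK, hsmall⟩ := exists_finiteDimensional_norm_inner_apply_self_le hT (ε := ε / 8)
    (by positivity)
  set P := Kᗮ.starProjection
  refine ⟨T - P * T * P, isCompactOperator_sub_compression K T, ?_⟩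
  have hcompr : ‖P * T * P‖ ≤ 4 * (ε / 8) :=
    opNorm_le_of_norm_inner_apply_self_le (by positivity) fun x => by
      rw [mul_apply_eq_comp, mul_apply_eq_comp,
        ← inner_starProjection_left_eq_right]
      calc ‖⟪P x, T (P x)⟫_ℂ‖ ≤ ε / 8 * ‖P x‖ ^ 2 := hsmall _ (starProjection_apply_mem _ x)
        _ ≤ ε / 8 * ‖x‖ ^ 2 := by gcongr; exact norm_starProjection_apply_le _ x
  rw [dist_eq_norm, sub_sub_cancel]
  linarith

theorem IsEssentiallyCentral.exists_isCompactOperator_sub_smul_one [CompleteSpace V]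
    (hV : ¬ FiniteDimensional ℂ V) {a : V →L[ℂ] V} (ha : IsEssentiallyCentral a) :
    ∃ z : ℂ, IsCompactOperator (a - z • (1 : V →L[ℂ] V)) := by
  obtain ⟨z, hz⟩ := ha.exists_tendsto_inner hV
  refine ⟨z, isCompactOperator_of_tendsto_inner_apply_self fun e he => ?_⟩
  simpa [inner_sub_right, inner_smul_right, he.1] using (hz e he).sub_const z

end Complex

end

/-- the center of the Calkin algebra of an infinite-dimensional Hilbert space
consists exactly of the scalars: an operator commutes with every operator modulo the compacts
if and only if it is a scalar multiple of the identity modulo the compacts. -/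
theorem calkin_center_eq_scalars
    {H : Type*} [NormedAddCommGroup H] [InnerProductSpace ℂ H] [CompleteSpace H]
    (hinf : ¬ FiniteDimensional ℂ H) (a : H →L[ℂ] H) :
    (∀ b : H →L[ℂ] H, IsCompactOperator ⇑(a ∘L b - b ∘L a)) ↔
      ∃ z : ℂ, IsCompactOperator ⇑(a - z • (1 : H →L[ℂ] H)) :=
  ⟨IsEssentiallyCentral.exists_isCompactOperator_sub_smul_one hinf,
    fun ⟨_, hz⟩ => isEssentiallyCentral_of_isCompactOperator_sub_smul_one hz⟩
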